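/- arXiv:2411.19188 — 3 statements merged into one kernel-verified Lean document; each statement's English description precedes it below -/
import Mathlib

section
/- Let T be a proper binary tree with saturated vertices u and w such that R_T(u) = R_T(w). Let u_1, w_1 be the respective siblings of u and w, and u_0, w_0 their respective parents, with neither u_0 nor w_0 an ancestor of the other. If R_T(w_1) ≥ R_T(u_1) and T* is the proper binary tree obtained from T by deleting the edges uu_0 and w_1w_0 and adding the edges uw_0 and w_1u_0 (i.e., exchanging the subtrees T(u) and T(w_1)), then R(T*) ≥ R(T). -/
/-!
Exchanging `T(u)` and `T(w₁)` keeps the multiset of moved subtrees, so the security changes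
only through the ranks of `u₀`, `w₀` and their ancestors. These ranks cannot drop: at `u₀` the
rank goes from `min (R u) (R u₁) + 1` to `min (R w₁) (R u₁) + 1 = R u₁ + 1`, at `w₀` from
`min (R w) (R w₁) + 1` to `min (R w) (R u) + 1 = R u + 1`, and the rank of a vertex is monotone
in the ranks of its children.
-/

/-- Proper binary trees: every internal vertex has exactly two children. -/
inductive BTree : Type
  | leaf : BTree
  | node : BTree → BTree → BTree
  deriving DecidableEq

namespace BTree

/-- The rank (protection number) of the root of a proper binary tree:
the minimum distance from the root to a leaf descendant. -/
def rank : BTree → ℕ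
  | leaf => 0
  | node l r => min l.rank r.rank + 1

/-- The security of a proper binary tree: the sum of the ranks of all vertices. -/
def security : BTree → ℕ
  | leaf => 0
  | node l r => (node l r).rank + l.security + r.security

/-- The number of leaves. -/
def leafCount : BTree → ℕ
  | leaf => 1
  | node l r => l.leafCount + r.leafCount

/-- The height: maximum distance from the root to a leaf. -/
def height : BTree → ℕ
  | leaf => 0
  | node l r => max l.height r.height + 1

/-- A tree is complete if all leaves are at the same depth. -/
def IsComplete : BTree → Prop
  | leaf => True
  | node l r => IsComplete l ∧ IsComplete r ∧ l.height = r.height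

/-- The subtree at a given position (a list of directions from the root;
`false` = first child, `true` = second child), if the position exists. -/
def subtreeAt : BTree → List Bool → Option BTree
  | t, [] => some t
  | leaf, _ :: _ => none
  | node l _, false :: p => subtreeAt l p
  | node _ r, true :: p => subtreeAt r p

/-- Replace the subtree at a given position by `s`. -/
def replaceAt : BTree → List Bool → BTree → BTree
  | _, [], s => s
  | leaf, _ :: _, _ => leaf
  | node l r, false :: p, s => node (replaceAt l p s) r
  | node l r, true :: p, s => node l (replaceAt r p s)

/-- The rank of the vertex at position `p` in `T` (rank of a vertex only depends
on the subtree consisting of the vertex and its descendants). -/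
def rankAt (T : BTree) (p : List Bool) : ℕ := ((T.subtreeAt p).map rank).getD 0

/-- The vertex at position `p` in `T` is saturated: its subtree is complete, but the
subtree of none of its (proper) ancestors is complete. -/
def Saturated (T : BTree) (p : List Bool) : Prop :=
  (∃ s, T.subtreeAt p = some s ∧ IsComplete s) ∧
  ∀ q s, q <+: p → q ≠ p → T.subtreeAt q = some s → ¬ IsComplete s

/-- The complete binary tree of height `m` (with `2 ^ m` leaves). -/
def completeTree : ℕ → BTree
  | 0 => leaf
  | m + 1 => node (completeTree m) (completeTree m)

/-- The tree `T_L` for `L = (n₁, …, n_k)`: a binary caterpillar whose spine vertices carry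
complete binary trees with `2 ^ nᵢ` leaves. -/
def TL : List ℕ → BTree
  | [] => leaf
  | n :: ns => ns.foldl (fun acc m => node acc (completeTree m)) (completeTree n)

/-- Helper for the almost complete tree: a complete binary tree of height `m`
whose leftmost `r` leaves each receive two leaf children. -/
def buildF : ℕ → ℕ → BTree
  | 0, r => if r = 0 then leaf else node leaf leaf
  | m + 1, r => node (buildF m (min r (2 ^ m))) (buildF m (r - 2 ^ m))

/-- The almost complete ("good") tree `F(ℓ)` on `ℓ` leaves. -/
def F (ℓ : ℕ) : BTree := buildF (Nat.log 2 ℓ) (ℓ - 2 ^ Nat.log 2 ℓ)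

end BTree

namespace BTree

def nodeAt : Bool → BTree → BTree → BTree
  | false, x, y => node x y
  | true, x, y => node y x

@[simp]
theorem rank_nodeAt (d : Bool) (x y : BTree) : (nodeAt d x y).rank = min x.rank y.rank + 1 := by
  cases d <;> simp [nodeAt, rank, min_comm]

@[simp]
theorem security_nodeAt (d : Bool) (x y : BTree) :
    (nodeAt d x y).security = min x.rank y.rank + 1 + x.security + y.security := by
  cases d <;> simp only [nodeAt, security, rank]
  omega

@[simp]
theorem replaceAt_nodeAt (d : Bool) (x y s : BTree) :
    (nodeAt d x y).replaceAt [d] s = nodeAt d s y := by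
  cases d <;> simp [nodeAt, replaceAt]

@[simp]
theorem replaceAt_nodeAt_not (d : Bool) (x y s : BTree) :
    (nodeAt d x y).replaceAt [!d] s = nodeAt d x s := by
  cases d <;> simp [nodeAt, replaceAt]

theorem subtreeAt_append (T : BTree) (p q : List Bool) :
    T.subtreeAt (p ++ q) = (T.subtreeAt p).bind (·.subtreeAt q) := by
  induction p generalizing T with
  | nil => simp [subtreeAt]
  | cons b p ih =>
    cases T with
    | leaf => simp [subtreeAt]
    | node l r => cases b <;> simp [subtreeAt, ih]

theorem subtreeAt_eq_nodeAt {T x y : BTree} {p : List Bool} {d : Bool}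
    (hx : T.subtreeAt (p ++ [d]) = some x) (hy : T.subtreeAt (p ++ [!d]) = some y) :
    T.subtreeAt p = some (nodeAt d x y) := by
  rw [subtreeAt_append] at hx hy
  cases h : T.subtreeAt p with
  | none => simp [h] at hx
  | some t =>
    rw [h] at hx hy
    cases t with
    | leaf => cases d <;> simp [subtreeAt] at hx
    | node l r => cases d <;> simp_all [subtreeAt, nodeAt]

theorem replaceAt_append {T t : BTree} {p : List Bool} (h : T.subtreeAt p = some t)
    (q : List Bool) (s : BTree) :
    T.replaceAt (p ++ q) s = T.replaceAt p (t.replaceAt q s) := by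
  induction p generalizing T with
  | nil => simp only [subtreeAt, Option.some.injEq] at h; simp [h, replaceAt]
  | cons b p ih =>
    cases T with
    | leaf => simp [subtreeAt] at h
    | node l r => cases b <;> simp_all [subtreeAt, replaceAt]

theorem subtreeAt_replaceAt {T t : BTree} {p : List Bool} (h : T.subtreeAt p = some t)
    (s : BTree) : (T.replaceAt p s).subtreeAt p = some s := by
  induction p generalizing T with
  | nil => simp [subtreeAt, replaceAt]
  | cons b p ih =>
    cases T with
    | leaf => simp [subtreeAt] at h
    | node l r => cases b <;> simp_all [subtreeAt, replaceAt]

theorem subtreeAt_replaceAt_of_not_prefix (T s : BTree) {p q : List Bool}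
    (hpq : ¬ p <+: q) (hqp : ¬ q <+: p) :
    (T.replaceAt p s).subtreeAt q = T.subtreeAt q := by
  induction p generalizing T q with
  | nil => exact absurd List.nil_prefix hpq
  | cons b p ih =>
    cases q with
    | nil => exact absurd List.nil_prefix hqp
    | cons c q =>
      cases T with
      | leaf => rfl
      | node l r =>
        simp only [List.cons_prefix_cons, not_and] at hpq hqp
        obtain rfl | hbc := eq_or_ne b c
        · cases b <;> simp [replaceAt, subtreeAt, ih _ (hpq rfl) (hqp rfl)]
        · cases b <;> cases c <;> simp_all [replaceAt, subtreeAt]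

@[simp]
theorem replaceAt_replaceAt (T a b : BTree) (p : List Bool) :
    (T.replaceAt p a).replaceAt p b = T.replaceAt p b := by
  induction p generalizing T with
  | nil => simp [replaceAt]
  | cons c p ih =>
    cases T with
    | leaf => simp [replaceAt]
    | node l r => cases c <;> simp_all [replaceAt]

theorem replaceAt_eq_self {T t : BTree} {p : List Bool} (h : T.subtreeAt p = some t) :
    T.replaceAt p t = T := by
  induction p generalizing T with
  | nil => simp only [subtreeAt, Option.some.injEq] at h; simp [h, replaceAt]
  | cons b p ih =>
    cases T with
    | leaf => simp [subtreeAt] at h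
    | node l r => cases b <;> simp_all [subtreeAt, replaceAt]

theorem rank_le_rank_replaceAt {T t s : BTree} {p : List Bool} (h : T.subtreeAt p = some t)
    (hr : t.rank ≤ s.rank) : T.rank ≤ (T.replaceAt p s).rank := by
  induction p generalizing T with
  | nil => simp only [subtreeAt, Option.some.injEq] at h; simpa [h, replaceAt] using hr
  | cons b p ih =>
    cases T with
    | leaf => simp [subtreeAt] at h
    | node l r =>
      cases b
      · have := ih (T := l) h
        simp only [replaceAt, rank]
        omega
      · have := ih (T := r) h
        simp only [replaceAt, rank]
        omega

theorem security_add_le_security_replaceAt_add {T t s : BTree} {p : List Bool}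
    (h : T.subtreeAt p = some t) (hr : t.rank ≤ s.rank) :
    T.security + s.security ≤ (T.replaceAt p s).security + t.security := by
  induction p generalizing T with
  | nil => simp only [subtreeAt, Option.some.injEq] at h; simp [h, replaceAt, add_comm]
  | cons b p ih =>
    cases T with
    | leaf => simp [subtreeAt] at h
    | node l r =>
      cases b
      · have := ih (T := l) h
        have := rank_le_rank_replaceAt (T := l) h hr
        simp only [replaceAt, security, rank]
        omega
      · have := ih (T := r) h
        have := rank_le_rank_replaceAt (T := r) h hr
        simp only [replaceAt, security, rank]
        omega

theorem security_le_security_replaceAt_replaceAt {T t₁ t₂ s₁ s₂ : BTree}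
    {p₁ p₂ : List Bool}
    (h₁ : T.subtreeAt p₁ = some t₁) (h₂ : T.subtreeAt p₂ = some t₂)
    (h₁₂ : ¬ p₁ <+: p₂) (h₂₁ : ¬ p₂ <+: p₁)
    (hr₁ : t₁.rank ≤ s₁.rank) (hr₂ : t₂.rank ≤ s₂.rank)
    (hsec : t₁.security + t₂.security ≤ s₁.security + s₂.security) :
    T.security ≤ ((T.replaceAt p₁ s₁).replaceAt p₂ s₂).security := by
  have h₂' : (T.replaceAt p₁ s₁).subtreeAt p₂ = some t₂ := by
    rwa [subtreeAt_replaceAt_of_not_prefix _ _ h₁₂ h₂₁]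
  have := security_add_le_security_replaceAt_add h₁ hr₁
  have := security_add_le_security_replaceAt_add h₂' hr₂
  omega

theorem security_le_security_swap_children {T x y : BTree} {p : List Bool} {d : Bool}
    (hx : T.subtreeAt (p ++ [d]) = some x) (hy : T.subtreeAt (p ++ [!d]) = some y) :
    T.security ≤ ((T.replaceAt (p ++ [d]) y).replaceAt (p ++ [!d]) x).security := by
  have hp := subtreeAt_eq_nodeAt hx hy
  rw [replaceAt_append hp, replaceAt_append (subtreeAt_replaceAt hp _), replaceAt_replaceAt,
    replaceAt_nodeAt, replaceAt_nodeAt_not]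
  have := security_add_le_security_replaceAt_add hp (s := nodeAt d y x)
    (by simp [min_comm])
  simp only [security_nodeAt, min_comm y.rank] at this
  omega

theorem security_le_security_exchange {T tu tw tu1 tw1 : BTree} {pu0 pw0 : List Bool}
    {du dw : Bool}
    (hu : T.subtreeAt (pu0 ++ [du]) = some tu) (hw : T.subtreeAt (pw0 ++ [dw]) = some tw)
    (hu1 : T.subtreeAt (pu0 ++ [!du]) = some tu1) (hw1 : T.subtreeAt (pw0 ++ [!dw]) = some tw1)
    (hrank : tu.rank = tw.rank) (huw : ¬ pu0 <+: pw0) (hwu : ¬ pw0 <+: pu0)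
    (hsib : tu1.rank ≤ tw1.rank) :
    T.security ≤ ((T.replaceAt (pu0 ++ [du]) tw1).replaceAt (pw0 ++ [!dw]) tu).security := by
  have hu0 := subtreeAt_eq_nodeAt hu hu1
  have hw0 := subtreeAt_eq_nodeAt hw hw1
  have hw0' : (T.replaceAt pu0 (nodeAt du tw1 tu1)).subtreeAt pw0 = some (nodeAt dw tw tw1) := by
    rwa [subtreeAt_replaceAt_of_not_prefix _ _ huw hwu]
  rw [replaceAt_append hu0, replaceAt_nodeAt, replaceAt_append hw0', replaceAt_nodeAt_not]
  refine security_le_security_replaceAt_replaceAt hu0 hw0 huw hwu ?_ ?_ ?_ <;>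
    simp only [rank_nodeAt, security_nodeAt] <;> omega

end BTree

open BTree in
theorem switching_lemma_one_general (T tu tw tu1 tw1 : BTree) (pu0 pw0 : List Bool) (du dw : Bool)
    (hu : T.subtreeAt (pu0 ++ [du]) = some tu)
    (hw : T.subtreeAt (pw0 ++ [dw]) = some tw)
    (hu1 : T.subtreeAt (pu0 ++ [!du]) = some tu1)
    (hw1 : T.subtreeAt (pw0 ++ [!dw]) = some tw1)
    (hrank : tu.rank = tw.rank)
    (hanc1 : ¬ (pu0 <+: pw0 ∧ pu0 ≠ pw0)) (hanc2 : ¬ (pw0 <+: pu0 ∧ pw0 ≠ pu0))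
    (hsib : tu1.rank ≤ tw1.rank) :
    T.security ≤ ((T.replaceAt (pu0 ++ [du]) tw1).replaceAt (pw0 ++ [!dw]) tu).security := by
  obtain rfl | hp := eq_or_ne pu0 pw0
  · obtain rfl | rfl := Bool.eq_or_eq_not dw du
    · obtain rfl : tw1 = tu1 := Option.some.inj (hw1.symm.trans hu1)
      exact security_le_security_swap_children hu hu1
    · obtain rfl : tw1 = tu := Option.some.inj (by rw [← hu, ← hw1, Bool.not_not])
      rw [Bool.not_not, replaceAt_replaceAt, replaceAt_eq_self hu]
  · exact security_le_security_exchange hu hw hu1 hw1 hrank (fun h => hanc1 ⟨h, hp⟩)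
      (fun h => hanc2 ⟨h, hp.symm⟩) hsib

open BTree in
/-- Switching lemma (Lemma sw1): for saturated vertices `u` (at position `pu0 ++ [du]`,
with parent `u₀` at `pu0` and sibling `u₁`) and `w` (at position `pw0 ++ [dw]`, with parent
`w₀` at `pw0` and sibling `w₁`) of equal rank, with neither parent an ancestor of the other,
if `R_T(w₁) ≥ R_T(u₁)` then exchanging the subtrees `T(u)` and `T(w₁)` does not decrease
the security. -/
theorem switching_lemma_one (T tu tw tu1 tw1 : BTree) (pu0 pw0 : List Bool) (du dw : Bool)
    (hu : T.subtreeAt (pu0 ++ [du]) = some tu)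
    (hw : T.subtreeAt (pw0 ++ [dw]) = some tw)
    (hu1 : T.subtreeAt (pu0 ++ [!du]) = some tu1)
    (hw1 : T.subtreeAt (pw0 ++ [!dw]) = some tw1)
    (hsatu : Saturated T (pu0 ++ [du]))
    (hsatw : Saturated T (pw0 ++ [dw]))
    (hrank : tu.rank = tw.rank)
    (hanc1 : ¬ (pu0 <+: pw0 ∧ pu0 ≠ pw0)) (hanc2 : ¬ (pw0 <+: pu0 ∧ pw0 ≠ pu0))
    (hsib : tu1.rank ≤ tw1.rank) :
    T.security ≤ ((T.replaceAt (pu0 ++ [du]) tw1).replaceAt (pw0 ++ [!dw]) tu).security :=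
  switching_lemma_one_general T tu tw tu1 tw1 pu0 pw0 du dw hu hw hu1 hw1 hrank hanc1 hanc2 hsib
end

section
/- For every proper binary tree T with ℓ leaves, where ℓ ≥ 2 has binary power representation L = (n_1, n_2, …, n_k), it holds that R(T) ≤ R(T_L). That is, the tree T_L maximizes the security among all proper binary trees with ℓ leaves. -/
/-! If `T` has `ℓ` leaves and `s₂` denotes the binary digit sum, then
`R(T) + ⌊log₂ ℓ⌋ + s₂(ℓ) < 2ℓ`. Since the root of `T = node l r` has rank at most
`min (⌊log₂ a⌋, ⌊log₂ b⌋) + 1` when `l`, `r` have `a`, `b` leaves, induction reduces this to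
`⌊log₂ (a + b)⌋ + s₂(a + b) ≤ max (⌊log₂ a⌋, ⌊log₂ b⌋) + s₂(a) + s₂(b)`.
By Legendre's formula `s₂(a) + s₂(b) - s₂(a + b)` is the `2`-adic valuation of `(a + b).choose b`,
i.e. by Kummer the number of carries in the binary addition `a + b`, and `a + b` can only
acquire a new leading bit through a carry. The caterpillar `T_L` attains the bound with equality,
because `⌊log₂ ℓ⌋ = n₁` and `s₂(ℓ) = k`. -/

namespace Nat

theorem padicValNat_two_choose_add_digits_sum (a b : ℕ) :
    padicValNat 2 ((a + b).choose b) + (digits 2 (a + b)).sum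
      = (digits 2 a).sum + (digits 2 b).sum := by
  have legendre (n : ℕ) : padicValNat 2 n ! + (digits 2 n).sum = n := by
    have := sub_one_mul_padicValNat_factorial (p := 2) n
    have := digit_sum_le 2 n
    omega
  have hfac : (a + b).choose b * b ! * a ! = (a + b)! := by
    simpa using choose_mul_factorial_mul_factorial (le_add_left b a)
  have hval := congrArg (padicValNat 2) hfac
  rw [padicValNat.mul (mul_ne_zero (choose_pos (le_add_left b a)).ne' (factorial_ne_zero b))
      (factorial_ne_zero a),
    padicValNat.mul (choose_pos (le_add_left b a)).ne' (factorial_ne_zero b)] at hval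
  have := legendre a
  have := legendre b
  have := legendre (a + b)
  omega

theorem log_two_add_le_max_add_padicValNat_choose (a b : ℕ) :
    log 2 (a + b) ≤ max (log 2 a) (log 2 b) + padicValNat 2 ((a + b).choose b) := by
  by_cases hi : log 2 (a + b) ≤ max (log 2 a) (log 2 b)
  · omega
  have ha : a < 2 ^ log 2 (a + b) := lt_pow_of_log_lt one_lt_two (by omega)
  have hb : b < 2 ^ log 2 (a + b) := lt_pow_of_log_lt one_lt_two (by omega)
  have hab : a + b ≠ 0 := fun h => by simp [h] at hi
  have hi_le : log 2 (a + b) ≤ max (log 2 a) (log 2 b) + 1 := by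
    have ha' : a < 2 ^ (max (log 2 a) (log 2 b) + 1) := lt_pow_of_log_lt one_lt_two (by omega)
    have hb' : b < 2 ^ (max (log 2 a) (log 2 b) + 1) := lt_pow_of_log_lt one_lt_two (by omega)
    have := log_lt_of_lt_pow hab (show a + b < 2 ^ (max (log 2 a) (log 2 b) + 2) by
      rw [pow_succ]; omega)
    omega
  have hcarry : 1 ≤ padicValNat 2 ((a + b).choose b) := by
    rw [padicValNat_choose' (lt_add_one _), Finset.one_le_card]
    refine ⟨log 2 (a + b), Finset.mem_filter.mpr ⟨Finset.mem_Ico.mpr ⟨by omega, lt_add_one _⟩, ?_⟩⟩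
    rw [mod_eq_of_lt ha, mod_eq_of_lt hb]
    linarith [pow_log_le_self 2 hab]
  omega

theorem log_two_add_add_digits_sum_le (a b : ℕ) :
    log 2 (a + b) + (digits 2 (a + b)).sum
      ≤ max (log 2 a) (log 2 b) + (digits 2 a).sum + (digits 2 b).sum := by
  have := padicValNat_two_choose_add_digits_sum a b
  have := log_two_add_le_max_add_padicValNat_choose a b
  omega

theorem digits_two_sum_two_pow_add {n r : ℕ} (hr : r < 2 ^ n) :
    (digits 2 (2 ^ n + r)).sum = (digits 2 r).sum + 1 := by
  have hlen : (digits 2 r).length ≤ n := (digits_length_le_iff one_lt_two r).mpr hr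
  have := digits_append_zeroes_append_digits (b := 2) (k := n - (digits 2 r).length) (m := 1)
    (n := r) one_lt_two one_pos
  rw [add_tsub_cancel_of_le hlen, mul_one, add_comm] at this
  rw [← this]
  simp

theorem log_two_two_pow_add {n r : ℕ} (hr : r < 2 ^ n) : log 2 (2 ^ n + r) = n :=
  log_eq_of_pow_le_of_lt_pow (le_add_right _ _) (by rw [pow_succ]; omega)

end Nat

namespace List

theorem sum_map_two_pow_lt {n : ℕ} {ns : List ℕ} (h : (n :: ns).IsChain (· > ·)) :
    (ns.map (2 ^ ·)).sum < 2 ^ n := by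
  induction ns generalizing n with
  | nil => simp
  | cons m ns ih =>
    obtain ⟨hnm, hm⟩ := isChain_cons_cons.mp h
    have : 2 ^ (m + 1) ≤ 2 ^ n := Nat.pow_le_pow_right two_pos hnm
    simp only [map_cons, sum_cons]
    have := ih hm
    rw [pow_succ] at *
    omega

theorem digits_two_sum_sum_map_two_pow {L : List ℕ} (h : L.IsChain (· > ·)) :
    (Nat.digits 2 (L.map (2 ^ ·)).sum).sum = L.length := by
  induction L with
  | nil => simp
  | cons n ns ih =>
    rw [map_cons, sum_cons, Nat.digits_two_sum_two_pow_add (sum_map_two_pow_lt h), ih h.tail,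
      length_cons]

end List

namespace BTree

theorem two_pow_rank_le_leafCount (T : BTree) : 2 ^ T.rank ≤ T.leafCount := by
  induction T with
  | leaf => simp [rank, leafCount]
  | node l r ihl ihr =>
    have hl : 2 ^ min l.rank r.rank ≤ 2 ^ l.rank := Nat.pow_le_pow_right two_pos (min_le_left _ _)
    have hr : 2 ^ min l.rank r.rank ≤ 2 ^ r.rank := Nat.pow_le_pow_right two_pos (min_le_right _ _)
    simp only [rank, leafCount, pow_succ]
    omega

theorem rank_le_log_leafCount (T : BTree) : T.rank ≤ Nat.log 2 T.leafCount :=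
  Nat.le_log_of_pow_le one_lt_two T.two_pow_rank_le_leafCount

theorem security_add_log_add_digits_sum_lt (T : BTree) :
    T.security + Nat.log 2 T.leafCount + (Nat.digits 2 T.leafCount).sum < 2 * T.leafCount := by
  induction T with
  | leaf => simp [security, leafCount]
  | node l r ihl ihr =>
    have := Nat.log_two_add_add_digits_sum_le l.leafCount r.leafCount
    have := l.rank_le_log_leafCount
    have := r.rank_le_log_leafCount
    simp only [security, leafCount, rank]
    omega

theorem rank_completeTree (m : ℕ) : (completeTree m).rank = m := by
  induction m with
  | zero => rfl
  | succ k ih => simp [completeTree, rank, ih]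

theorem security_completeTree_add (m : ℕ) : (completeTree m).security + m + 2 = 2 ^ (m + 1) := by
  induction m with
  | zero => simp [completeTree, security]
  | succ k ih =>
    simp only [completeTree, security, rank, rank_completeTree, min_self, pow_succ] at ih ⊢
    omega

theorem security_foldl_node_completeTree (t : BTree) {ns : List ℕ}
    (h : (t.rank :: ns).IsChain (· > ·)) :
    (ns.foldl (fun acc m => node acc (completeTree m)) t).security + ns.length
      = t.security + 2 * (ns.map (2 ^ ·)).sum := by
  induction ns generalizing t with
  | nil => simp
  | cons m ns ih =>
    obtain ⟨htm, hm⟩ := List.isChain_cons_cons.mp h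
    have hrank : (node t (completeTree m)).rank = m + 1 := by
      simp only [rank, rank_completeTree]
      omega
    have := ih (node t (completeTree m))
      (hrank ▸ hm.imp_head fun {_} (h : _ < m) => Nat.lt_succ_of_lt h)
    have := security_completeTree_add m
    simp only [List.foldl_cons, List.map_cons, List.sum_cons, List.length_cons, security, hrank,
      pow_succ] at *
    omega

theorem security_TL_add_log_add_digits_sum {n : ℕ} {ns : List ℕ}
    (h : (n :: ns).IsChain (· > ·)) :
    (TL (n :: ns)).security + Nat.log 2 ((n :: ns).map (2 ^ ·)).sum
      + (Nat.digits 2 ((n :: ns).map (2 ^ ·)).sum).sum + 1 = 2 * ((n :: ns).map (2 ^ ·)).sum := by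
  have hlen := List.digits_two_sum_sum_map_two_pow h
  have hfold := security_foldl_node_completeTree (completeTree n) (rank_completeTree n ▸ h)
  have := security_completeTree_add n
  simp only [TL, List.map_cons, List.sum_cons, List.length_cons, pow_succ] at *
  rw [Nat.log_two_two_pow_add (List.sum_map_two_pow_lt h)]
  omega

end BTree

open BTree in
theorem security_le_security_TL_general (ℓ : ℕ) (L : List ℕ)
    (hdec : L.Chain' (· > ·)) (hsum : (L.map (2 ^ ·)).sum = ℓ)
    (T : BTree) (hT : T.leafCount = ℓ) :
    T.security ≤ (TL L).security := by
  have hT_bound := T.security_add_log_add_digits_sum_lt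
  rw [hT] at hT_bound
  cases L with
  | nil =>
    simp only [List.map_nil, List.sum_nil] at hsum
    omega
  | cons n ns =>
    have hTL := security_TL_add_log_add_digits_sum hdec
    rw [hsum] at hTL
    omega

open BTree in
/-- Theorem (optimality of `T_L`): for every proper binary tree `T` with `ℓ ≥ 2` leaves,
where `ℓ` has binary power representation `L = (n₁, …, n_k)` (so `L` is strictly decreasing
and `ℓ = 2^{n₁} + ⋯ + 2^{n_k}`), we have `R(T) ≤ R(T_L)`. -/
theorem security_le_security_TL (ℓ : ℕ) (hℓ : 2 ≤ ℓ) (L : List ℕ)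
    (hdec : L.Chain' (· > ·)) (hsum : (L.map (2 ^ ·)).sum = ℓ)
    (T : BTree) (hT : T.leafCount = ℓ) :
    T.security ≤ (TL L).security :=
  security_le_security_TL_general ℓ L hdec hsum T hT
end

section
/- For every positive integer ℓ ≥ 2, the almost complete tree F(ℓ) maximizes the security among all proper binary trees with ℓ leaves: for every proper binary tree T with ℓ leaves, R(T) ≤ R(F(ℓ)). -/
namespace Nat

theorem sum_digits_add_sub_one_mul_padicValNat_choose (p : ℕ) [Fact p.Prime] (a b : ℕ) :
    (p.digits (a + b)).sum + (p - 1) * padicValNat p ((a + b).choose b) =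
      (p.digits a).sum + (p.digits b).sum := by
  have legendre (n : ℕ) : (p - 1) * padicValNat p n ! + (p.digits n).sum = n := by
    rw [sub_one_mul_padicValNat_factorial]
    exact Nat.sub_add_cancel (digit_sum_le p n)
  have hfac : padicValNat p (a + b)! =
      padicValNat p ((a + b).choose b) + padicValNat p a ! + padicValNat p b ! := by
    have hC : (a + b).choose b ≠ 0 := (choose_pos (le_add_left b a)).ne'
    rw [← add_choose_mul_factorial_mul_factorial,
      padicValNat.mul (mul_ne_zero hC (factorial_ne_zero a)) (factorial_ne_zero b),
      padicValNat.mul hC (factorial_ne_zero a)]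
  have hab := legendre (a + b)
  rw [hfac, mul_add, mul_add] at hab
  have := legendre a
  have := legendre b
  omega

theorem sum_digits_add_base_pow {b m r : ℕ} (hb : 1 < b) (hr : r < b ^ m) :
    (b.digits (r + b ^ m)).sum = (b.digits r).sum + 1 := by
  have hlen : (b.digits r).length + (m - (b.digits r).length) = m := by
    have := (digits_length_le_iff hb r).2 hr
    omega
  have := digits_append_zeroes_append_digits (k := m - (b.digits r).length) (n := r) hb one_pos
  rw [hlen, mul_one] at this
  rw [← this]
  simp [digits_of_lt b 1 one_ne_zero hb]

theorem sum_digits_two_pow (m : ℕ) : (digits 2 (2 ^ m)).sum = 1 := by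
  simpa using sum_digits_add_base_pow one_lt_two (Nat.pow_pos (n := m) two_pos)

theorem sum_digits_two_add_log_le (a b : ℕ) :
    (digits 2 (a + b)).sum + log 2 (a + b) ≤
      (digits 2 a).sum + (digits 2 b).sum + max (log 2 a) (log 2 b) := by
  have hsum := sum_digits_add_sub_one_mul_padicValNat_choose 2 a b
  rw [show 2 - 1 = 1 from rfl, one_mul] at hsum
  set M := max (log 2 a) (log 2 b)
  set L := log 2 (a + b)
  rcases le_or_gt L M with hLM | hML
  · omega
  have ha : a < 2 ^ (M + 1) := (lt_pow_succ_log_self one_lt_two a).trans_le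
    (pow_le_pow_right₀ one_le_two (by omega))
  have hb : b < 2 ^ (M + 1) := (lt_pow_succ_log_self one_lt_two b).trans_le
    (pow_le_pow_right₀ one_le_two (by omega))
  have hab : a + b ≠ 0 := by
    rintro h0
    simp [L, h0] at hML
  have hL : L < M + 2 := log_lt_of_lt_pow hab (by rw [pow_succ]; omega)
  have hcarry : L ∈ {i ∈ Finset.Ico 1 (L + 1) | 2 ^ i ≤ b % 2 ^ i + a % 2 ^ i} := by
    have hpow : 2 ^ (M + 1) ≤ 2 ^ L := pow_le_pow_right₀ one_le_two hML
    simp only [Finset.mem_filter, Finset.mem_Ico]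
    refine ⟨by omega, ?_⟩
    rw [mod_eq_of_lt (by omega), mod_eq_of_lt (by omega)]
    exact add_comm a b ▸ pow_log_le_self 2 hab
  have := Finset.card_pos.2 ⟨L, hcarry⟩
  rw [← padicValNat_choose' (lt_add_one L)] at this
  omega

end Nat

namespace BTree

theorem leafCount_pos (T : BTree) : 0 < T.leafCount := by
  induction T with
  | leaf => exact one_pos
  | node l r ihl ihr => simp only [leafCount]; omega

theorem rank_buildF (m r : ℕ) (hr : r ≤ 2 ^ m) :
    (buildF m r).rank = if r = 2 ^ m then m + 1 else m := by
  induction m generalizing r with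
  | zero => interval_cases r <;> rfl
  | succ m ih =>
    have hp : 2 ^ (m + 1) = 2 * 2 ^ m := by ring
    rw [buildF, rank, ih _ (min_le_right _ _), ih _ (by omega)]
    split_ifs <;> omega

theorem security_buildF (m r : ℕ) (hr : r ≤ 2 ^ m) :
    (buildF m r).security + m + 2 + (Nat.digits 2 r).sum = 2 ^ (m + 1) + 2 * r := by
  induction m generalizing r with
  | zero => interval_cases r <;> rfl
  | succ m ih =>
    have hp : 2 ^ (m + 1) = 2 * 2 ^ m := by ring
    have hsec : (buildF (m + 1) r).security = (buildF (m + 1) r).rank +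
        (buildF m (min r (2 ^ m))).security + (buildF m (r - 2 ^ m)).security := rfl
    rw [hsec, rank_buildF (m + 1) r hr]
    rcases le_or_gt r (2 ^ m) with hle | hgt
    · have hl := ih r hle
      have hr0 := ih 0 (Nat.zero_le _)
      rw [Nat.digits_zero, List.sum_nil] at hr0
      rw [min_eq_left hle, Nat.sub_eq_zero_of_le hle, if_neg (by omega)]
      omega
    · have hl := ih (2 ^ m) le_rfl
      rw [Nat.sum_digits_two_pow] at hl
      rw [min_eq_right hgt.le]
      rcases hr.lt_or_eq with hlt | rfl
      · have hr' := ih (r - 2 ^ m) (by omega)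
        have hdig := Nat.sum_digits_add_base_pow one_lt_two (show r - 2 ^ m < 2 ^ m by omega)
        rw [Nat.sub_add_cancel hgt.le] at hdig
        rw [if_neg hlt.ne]
        omega
      · have hsub : 2 ^ (m + 1) - 2 ^ m = 2 ^ m := by omega
        rw [hsub, if_pos rfl, Nat.sum_digits_two_pow]
        omega

theorem security_F (n : ℕ) (hn : n ≠ 0) :
    (F n).security + Nat.log 2 n + (Nat.digits 2 n).sum + 1 = 2 * n := by
  have hlow := Nat.pow_log_le_self 2 hn
  have hhigh := Nat.lt_pow_succ_log_self one_lt_two n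
  rw [pow_succ] at hhigh
  have hr : n - 2 ^ Nat.log 2 n < 2 ^ Nat.log 2 n := by omega
  have hdig := Nat.sum_digits_add_base_pow one_lt_two hr
  rw [Nat.sub_add_cancel hlow] at hdig
  have := security_buildF _ _ hr.le
  rw [pow_succ] at this
  rw [F]
  omega

theorem security_F_add_security_F_add_min_log_lt (a b : ℕ) (ha : a ≠ 0) (hb : b ≠ 0) :
    (F a).security + (F b).security + min (Nat.log 2 a) (Nat.log 2 b) < (F (a + b)).security := by
  have := Nat.sum_digits_two_add_log_le a b
  have := security_F a ha
  have := security_F b hb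
  have := security_F (a + b) (by omega)
  omega

theorem security_le_security_F_leafCount (T : BTree) : T.security ≤ (F T.leafCount).security := by
  induction T with
  | leaf => exact Nat.zero_le _
  | node l r ihl ihr =>
    have := rank_le_log_leafCount l
    have := rank_le_log_leafCount r
    have := security_F_add_security_F_add_min_log_lt _ _ (leafCount_pos l).ne' (leafCount_pos r).ne'
    simp only [security, rank, leafCount]
    omega

end BTree

open BTree in
theorem security_le_security_F_general (ℓ : ℕ) (T : BTree) (hT : T.leafCount = ℓ) :
    T.security ≤ (F ℓ).security :=
  hT ▸ security_le_security_F_leafCount T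

open BTree in
/-- For every integer `ℓ ≥ 2`, the almost complete tree `F(ℓ)` maximizes the security among
all proper binary trees with `ℓ` leaves. -/
theorem security_le_security_F (ℓ : ℕ) (hℓ : 2 ≤ ℓ) (T : BTree) (hT : T.leafCount = ℓ) :
    T.security ≤ (F ℓ).security :=
  security_le_security_F_general ℓ T hT
end
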